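/- Define the polynomials d₂(m₁,m₂) = m₁² + m₁m₂ + m₂² + 3m₁ + 3m₂ and d₃(m₁,m₂) = (1/9)(m₁ + 2m₂)(6 + 2m₁ + m₂)(m₁ − m₂ − 3). If a polynomial f ∈ ℂ[x,y] satisfies f(d₂(m₁,m₂), d₃(m₁,m₂)) = 0 for all sufficiently large integers m₁ and m₂ (i.e., there exists M such that this holds whenever m₁ ≥ M and m₂ ≥ M), then f = 0. -/
import Mathlib


/-- The eigenvalue of the quadratic Casimir generator on the irreducible representation of
`𝔰𝔩₃` with highest weight `(m₁, m₂)`. -/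
noncomputable def casimirD2 (m₁ m₂ : ℂ) : ℂ :=
  m₁ ^ 2 + m₁ * m₂ + m₂ ^ 2 + 3 * m₁ + 3 * m₂

/-- The eigenvalue of the cubic Casimir generator on the irreducible representation of
`𝔰𝔩₃` with highest weight `(m₁, m₂)`. -/
noncomputable def casimirD3 (m₁ m₂ : ℂ) : ℂ :=
  (1 / 9) * (m₁ + 2 * m₂) * (6 + 2 * m₁ + m₂) * (m₁ - m₂ - 3)

open Polynomial

/-- Auxiliary: any value of the cubic `(k-3)(3x - k² - 3k) - 9y` in `k` is attained. -/
lemma casimir_cubic_root (x y : ℂ) : ∃ k : ℂ, (k - 3) * (3 * x - k ^ 2 - 3 * k) = 9 * y := by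
  have hd : (C (-1) * X ^ 3 + C 0 * X ^ 2 + C (3 * x + 9) * X + C (-9 * x - 9 * y)).degree = 3 :=
    degree_cubic (by norm_num)
  obtain ⟨k, hk⟩ := Complex.exists_root (by rw [hd]; norm_num)
  refine ⟨k, ?_⟩
  simp only [IsRoot, eval_add, eval_mul, eval_pow, eval_C, eval_X] at hk
  linear_combination hk

/-- Auxiliary: any complex quadratic with leading coefficient `3` has a root. -/
lemma casimir_quad_root (c₁ c₀ : ℂ) : ∃ t : ℂ, 3 * t ^ 2 + c₁ * t + c₀ = 0 := by
  have hd : (C 3 * X ^ 2 + C c₁ * X + C c₀).degree = 2 := degree_quadratic (by norm_num)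
  obtain ⟨t, ht⟩ := Complex.exists_root (by rw [hd]; norm_num)
  refine ⟨t, ?_⟩
  simp only [IsRoot, eval_add, eval_mul, eval_pow, eval_C, eval_X] at ht
  linear_combination ht

/-- The joint map `(d₂, d₃) : ℂ² → ℂ²` is surjective. -/
lemma casimir_surj (x y : ℂ) : ∃ a b : ℂ, casimirD2 a b = x ∧ casimirD3 a b = y := by
  obtain ⟨k, hk⟩ := casimir_cubic_root x y
  obtain ⟨t, ht⟩ := casimir_quad_root (3 * k + 6) (k ^ 2 + 3 * k - x)
  refine ⟨t + k, t, ?_, ?_⟩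
  · unfold casimirD2; linear_combination ht
  · unfold casimirD3; linear_combination (1/9 : ℂ) * hk + ((k - 3)/3) * ht

/-- `d₂` as an element of `(ℂ[a])[b]` (inner variable `C X = a`, outer variable `X = b`). -/
noncomputable def casimirD2P : Polynomial (Polynomial ℂ) :=
  (C X) ^ 2 + C X * X + X ^ 2 + 3 * C X + 3 * X

/-- `d₃` as an element of `(ℂ[a])[b]`. -/
noncomputable def casimirD3P : Polynomial (Polynomial ℂ) :=
  C (C (1/9)) * (C X + 2 * X) * (6 + 2 * C X + X) * (C X - X - 3)

/-- Evaluation of `(ℂ[a])[b]` at `(a, b)`, as a `ℂ`-algebra hom. -/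
noncomputable def casimirEval (a b : ℂ) : Polynomial (Polynomial ℂ) →ₐ[ℂ] ℂ :=
  aevalTower (aeval a) b

lemma casimirEval_apply (a b : ℂ) (p : Polynomial (Polynomial ℂ)) :
    casimirEval a b p
      = eval b (p.map ((aeval a : Polynomial ℂ →ₐ[ℂ] ℂ) : Polynomial ℂ →+* ℂ)) := by
  rw [← eval₂_eq_eval_map]; rfl

lemma casimirEval_aeval (f : MvPolynomial (Fin 2) ℂ) (a b : ℂ) :
    casimirEval a b (MvPolynomial.aeval ![casimirD2P, casimirD3P] f)
      = MvPolynomial.eval ![casimirD2 a b, casimirD3 a b] f := by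
  have h := AlgHom.congr_fun
    (MvPolynomial.comp_aeval ![casimirD2P, casimirD3P] (casimirEval a b)) f
  simp only [AlgHom.comp_apply] at h
  rw [h]
  have hv : (fun i => casimirEval a b (![casimirD2P, casimirD3P] i))
      = ![casimirD2 a b, casimirD3 a b] := by
    funext i
    fin_cases i <;>
      simp [casimirEval, casimirD2P, casimirD3P, casimirD2, casimirD3, map_add, map_mul,
        map_pow, map_sub, map_ofNat]
  rw [hv, MvPolynomial.aeval_def, Algebra.algebraMap_self]
  rfl

lemma casimir_cast_injective (M : ℤ) :
    Function.Injective (fun j : ℕ => ((M + j : ℤ) : ℂ)) := by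
  intro i j hij
  simp only at hij
  have h2 : (M + i : ℤ) = (M + j : ℤ) := by exact_mod_cast hij
  omega

/-- a polynomial in two variables vanishing at the points
`(d₂(m₁,m₂), d₃(m₁,m₂))` for all sufficiently large integers `m₁, m₂` is the zero
polynomial. -/
theorem stmt_16 (f : MvPolynomial (Fin 2) ℂ)
    (h : ∃ M : ℤ, ∀ m₁ m₂ : ℤ, M ≤ m₁ → M ≤ m₂ →
      MvPolynomial.eval ![casimirD2 (m₁ : ℂ) (m₂ : ℂ), casimirD3 (m₁ : ℂ) (m₂ : ℂ)] f = 0) :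
    f = 0 := by
  obtain ⟨M, h⟩ := h
  set P := MvPolynomial.aeval ![casimirD2P, casimirD3P] f with hPdef
  -- For each fixed integer `m₁ ≥ M`, the specialization in `a = m₁` vanishes.
  have hQ : ∀ m₁ : ℤ, M ≤ m₁ →
      P.map ((aeval ((m₁ : ℂ)) : Polynomial ℂ →ₐ[ℂ] ℂ) : Polynomial ℂ →+* ℂ) = 0 := by
    intro m₁ hm₁
    apply Polynomial.eq_zero_of_infinite_isRoot
    apply Set.infinite_of_injective_forall_mem (casimir_cast_injective M)
    intro j
    show IsRoot _ ((M + j : ℤ) : ℂ)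
    rw [IsRoot, ← casimirEval_apply, hPdef, casimirEval_aeval]
    exact h m₁ (M + j) hm₁ (by omega)
  -- Hence `P = 0`.
  have hP : P = 0 := by
    apply Polynomial.ext
    intro n
    rw [Polynomial.coeff_zero]
    apply Polynomial.eq_zero_of_infinite_isRoot
    apply Set.infinite_of_injective_forall_mem (casimir_cast_injective M)
    intro j
    show IsRoot _ ((M + j : ℤ) : ℂ)
    have h0 := congrArg (fun q => Polynomial.coeff q n) (hQ (M + j) (by omega))
    simpa [Polynomial.coeff_map, IsRoot] using h0
  -- Hence `f` vanishes on the image of `(d₂, d₃)`, which is all of `ℂ²`.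
  have hall : ∀ v : Fin 2 → ℂ, MvPolynomial.eval v f = 0 := by
    intro v
    obtain ⟨a, b, h2, h3⟩ := casimir_surj (v 0) (v 1)
    have h4 : MvPolynomial.eval ![casimirD2 a b, casimirD3 a b] f = 0 := by
      rw [← casimirEval_aeval, ← hPdef, hP, map_zero]
    rw [h2, h3] at h4
    have hv : ![v 0, v 1] = v := by
      funext i; fin_cases i <;> rfl
    rwa [hv] at h4
  exact MvPolynomial.funext fun x => by simp [hall x]
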